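/- arXiv:math/0309009 — 2 statements merged into one kernel-verified Lean document; each statement's English description precedes it below -/
import Mathlib

section
/- Let X_1, ..., X_n be (dependent) real random variables such that for each i, conditionally on X_1,...,X_{i-1}, one has P(X_i > λ) ≤ C₁ e^{-c₁ λ} for all λ > 0, where C₁, c₁ > 0 are constants. Then there exist constants C, c > 0 depending only on C₁, c₁ such that P(∑_{i=1}^n X_i > λ n) ≤ C e^{-c λ} for all λ > 0. -/
/-!
A Chernoff bound at `t = c₁ / 2`. Splitting `ℝ` into the unit layers `j + 1 < x ≤ j + 2`, the
tail bound makes `exp (t X_k)` have mean at most `M = expMomentConst C₁ c₁ t` under any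
reweighting of `P` by a density that is measurable with respect to `X_0, …, X_{k-1}`
(such a reweighting keeps the conditional tail bound). Peeling off the summands one at a time
gives `E exp (t S_n) ≤ M ^ n`, hence `P (S_n > λ n) ≤ (M e^{-t λ}) ^ n`, which is at most
`M e^{-t λ}` when this is below `1`; otherwise the bound is trivial. Lower Lebesgue integrals
sidestep every integrability question.
-/

open MeasureTheory ProbabilityTheory Real

lemma ofReal_exp_mul_le_add_tsum_indicator {t : ℝ} (ht : 0 ≤ t) (x : ℝ) :
    ENNReal.ofReal (exp (t * x)) ≤ ENNReal.ofReal (exp t) +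
      ∑' j : ℕ, {y : ℝ | (j : ℝ) + 1 < y}.indicator
        (fun _ => ENNReal.ofReal (exp (t * (j + 2)))) x := by
  rcases le_or_gt x 1 with hx | hx
  · exact le_add_right (ENNReal.ofReal_le_ofReal (exp_le_exp.2 (by nlinarith)))
  · set j := ⌈x - 2⌉₊
    have hj1 : (j : ℝ) + 1 < x := by
      rcases le_or_gt 0 (x - 2) with h | h
      · linarith [Nat.ceil_lt_add_one h]
      · simp only [j, Nat.ceil_eq_zero.2 h.le, Nat.cast_zero]
        linarith
    have hj2 : x ≤ j + 2 := by linarith [Nat.le_ceil (x - 2)]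
    refine le_add_left (le_trans ?_ (ENNReal.le_tsum j))
    rw [Set.indicator_of_mem (show x ∈ {y : ℝ | (j : ℝ) + 1 < y} from hj1)]
    exact ENNReal.ofReal_le_ofReal (exp_le_exp.2 (mul_le_mul_of_nonneg_left hj2 ht))

-- `e^t` bounds `exp (t x)` for `x ≤ 1`, and the layer `j + 1 < x ≤ j + 2` costs at most
-- `e^{t (j + 2)} C₁ e^{-c₁ (j + 1)}`: a geometric series of ratio `e^{t - c₁}`.
noncomputable def expMomentConst (C₁ c₁ t : ℝ) : ℝ :=
  exp t + C₁ * exp (2 * t - c₁) * (1 - exp (t - c₁))⁻¹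

section

variable {Ω : Type*} {m mΩ : MeasurableSpace Ω} {P : Measure Ω} {C₁ c₁ t : ℝ}

lemma lintegral_exp_mul_le_of_tail {ν : Measure Ω} {X : Ω → ℝ} (hX : Measurable X)
    (hC₁ : 0 ≤ C₁) (ht : 0 ≤ t) (htc : t < c₁)
    (htail : ∀ s > 0,
      ν {ω | s < X ω} ≤ ENNReal.ofReal (C₁ * exp (-c₁ * s)) * ν Set.univ) :
    ∫⁻ ω, ENNReal.ofReal (exp (t * X ω)) ∂ν
      ≤ ENNReal.ofReal (expMomentConst C₁ c₁ t) * ν Set.univ := by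
  set r := exp (t - c₁)
  have hr0 : 0 ≤ r := (exp_pos _).le
  have hr1 : r < 1 := exp_lt_one_iff.2 (by linarith)
  have hterm : ∀ j : ℕ, exp (t * (j + 2)) * (C₁ * exp (-c₁ * (j + 1)))
      = C₁ * exp (2 * t - c₁) * r ^ j := by
    intro j
    rw [← exp_nat_mul, mul_left_comm, mul_assoc, ← exp_add, ← exp_add]
    ring_nf
  have hsum : ∑' j : ℕ, C₁ * exp (2 * t - c₁) * r ^ j
      = C₁ * exp (2 * t - c₁) * (1 - r)⁻¹ := by
    rw [tsum_mul_left, tsum_geometric_of_lt_one hr0 hr1]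
  have hlevel : ∀ j : ℕ, MeasurableSet {y : ℝ | (j : ℝ) + 1 < y} :=
    fun j => measurableSet_lt measurable_const measurable_id
  calc ∫⁻ ω, ENNReal.ofReal (exp (t * X ω)) ∂ν
      ≤ ∫⁻ ω, (ENNReal.ofReal (exp t) + ∑' j : ℕ, {y : ℝ | (j : ℝ) + 1 < y}.indicator
          (fun _ => ENNReal.ofReal (exp (t * (j + 2)))) (X ω)) ∂ν :=
        lintegral_mono fun ω => ofReal_exp_mul_le_add_tsum_indicator ht (X ω)
    _ = ENNReal.ofReal (exp t) * ν Set.univ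
          + ∑' j : ℕ, ENNReal.ofReal (exp (t * (j + 2))) * ν {ω | (j : ℝ) + 1 < X ω} := by
        rw [lintegral_add_left measurable_const, lintegral_const,
          lintegral_tsum (f := fun (j : ℕ) ω => {y : ℝ | (j : ℝ) + 1 < y}.indicator
            (fun _ => ENNReal.ofReal (exp (t * (j + 2)))) (X ω))
            fun j => ((measurable_const.indicator (hlevel j)).comp hX).aemeasurable]
        simp_rw [lintegral_indicator_const_comp hX (hlevel _)]
        rfl
    _ ≤ ENNReal.ofReal (exp t) * ν Set.univ
          + ∑' j : ℕ, ENNReal.ofReal (C₁ * exp (2 * t - c₁) * r ^ j) * ν Set.univ := by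
        refine add_le_add le_rfl (ENNReal.tsum_le_tsum fun j => ?_)
        calc ENNReal.ofReal (exp (t * (j + 2))) * ν {ω | (j : ℝ) + 1 < X ω}
            ≤ ENNReal.ofReal (exp (t * (j + 2)))
                * (ENNReal.ofReal (C₁ * exp (-c₁ * (j + 1))) * ν Set.univ) := by
              gcongr
              exact htail _ (by positivity)
          _ = _ := by rw [← mul_assoc, ← ENNReal.ofReal_mul (exp_pos _).le, hterm]
    _ = ENNReal.ofReal (expMomentConst C₁ c₁ t) * ν Set.univ := by
        rw [ENNReal.tsum_mul_right, ← ENNReal.ofReal_tsum_of_nonneg (fun j => by positivity)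
          ((summable_geometric_of_lt_one hr0 hr1).mul_left _), hsum, ← add_mul,
          ← ENNReal.ofReal_add (exp_pos _).le
            (mul_nonneg (by positivity) (inv_nonneg.2 (by linarith)))]
        rfl

variable [IsFiniteMeasure P]

lemma measure_inter_le_of_condExp_indicator_le (hm : m ≤ mΩ) {B : Set Ω}
    (hB : MeasurableSet B) {q : ℝ}
    (hq : ∀ᵐ ω ∂P, P[B.indicator (fun _ => (1 : ℝ)) | m] ω ≤ q) {A : Set Ω}
    (hA : MeasurableSet[m] A) :
    P (A ∩ B) ≤ ENNReal.ofReal q * P A := by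
  have hreal : P.real (A ∩ B) ≤ q * P.real A :=
    calc P.real (A ∩ B) = ∫ ω in A, B.indicator (fun _ => (1 : ℝ)) ω ∂P := by
          rw [setIntegral_indicator hB, setIntegral_const, smul_eq_mul, mul_one]
      _ = ∫ ω in A, P[B.indicator (fun _ => (1 : ℝ)) | m] ω ∂P :=
          (setIntegral_condExp hm ((integrable_const 1).indicator hB) hA).symm
      _ ≤ ∫ _ in A, q ∂P :=
          setIntegral_mono_ae integrable_condExp.integrableOn integrableOn_const hq
      _ = q * P.real A := by rw [setIntegral_const, smul_eq_mul, mul_comm]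
  rw [← ofReal_measureReal, ← ofReal_measureReal, ← ENNReal.ofReal_mul' measureReal_nonneg]
  exact ENNReal.ofReal_le_ofReal hreal

lemma withDensity_le_of_condExp_indicator_le (hm : m ≤ mΩ) {B : Set Ω}
    (hB : MeasurableSet B) {q : ℝ}
    (hq : ∀ᵐ ω ∂P, P[B.indicator (fun _ => (1 : ℝ)) | m] ω ≤ q) {F : Ω → ENNReal}
    (hF : Measurable[m] F) :
    P.withDensity F B ≤ ENNReal.ofReal q * ∫⁻ ω, F ω ∂P := by
  -- Integrals of `m`-measurable functions only see a measure through its trim to `m`.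
  have hle : (P.restrict B).trim hm ≤ (ENNReal.ofReal q • P).trim hm := by
    refine Measure.le_iff.2 fun A hA => ?_
    rw [trim_measurableSet_eq hm hA, trim_measurableSet_eq hm hA,
      Measure.restrict_apply (hm A hA), Measure.smul_apply, smul_eq_mul]
    exact measure_inter_le_of_condExp_indicator_le hm hB hq hA
  calc P.withDensity F B = ∫⁻ ω, F ω ∂(P.restrict B).trim hm := by
        rw [withDensity_apply _ hB, lintegral_trim hm hF]
    _ ≤ ∫⁻ ω, F ω ∂(ENNReal.ofReal q • P).trim hm := lintegral_mono' hle le_rfl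
    _ = ENNReal.ofReal q * ∫⁻ ω, F ω ∂P := by
        rw [lintegral_trim hm hF, lintegral_smul_measure, smul_eq_mul]

lemma lintegral_mul_exp_le_of_condExp_tail (hm : m ≤ mΩ) {Y : Ω → ℝ}
    (hY : Measurable Y) (hC₁ : 0 ≤ C₁) (ht : 0 ≤ t) (htc : t < c₁)
    (hcond : ∀ s : ℝ, 0 < s → ∀ᵐ ω ∂P,
      P[{ω' | s < Y ω'}.indicator (fun _ => (1 : ℝ)) | m] ω ≤ C₁ * exp (-c₁ * s))
    {F : Ω → ENNReal} (hF : Measurable[m] F) :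
    ∫⁻ ω, F ω * ENNReal.ofReal (exp (t * Y ω)) ∂P
      ≤ ENNReal.ofReal (expMomentConst C₁ c₁ t) * ∫⁻ ω, F ω ∂P := by
  have hFΩ : Measurable F := hF.mono hm le_rfl
  have hexp : Measurable fun ω => ENNReal.ofReal (exp (t * Y ω)) := by fun_prop
  have hdensity_univ : P.withDensity F Set.univ = ∫⁻ ω, F ω ∂P := by
    rw [withDensity_apply _ MeasurableSet.univ, setLIntegral_univ]
  calc ∫⁻ ω, F ω * ENNReal.ofReal (exp (t * Y ω)) ∂P
      = ∫⁻ ω, ENNReal.ofReal (exp (t * Y ω)) ∂P.withDensity F :=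
        (lintegral_withDensity_eq_lintegral_mul P hFΩ hexp).symm
    _ ≤ ENNReal.ofReal (expMomentConst C₁ c₁ t) * P.withDensity F Set.univ :=
        lintegral_exp_mul_le_of_tail hY hC₁ ht htc fun s hs => hdensity_univ ▸
          withDensity_le_of_condExp_indicator_le hm (measurableSet_lt measurable_const hY)
            (hcond s hs) hF
    _ = ENNReal.ofReal (expMomentConst C₁ c₁ t) * ∫⁻ ω, F ω ∂P := by rw [hdensity_univ]

lemma measurable_sum_range_iSup_comap (X : ℕ → Ω → ℝ) (k : ℕ) :
    Measurable[⨆ j ∈ Finset.range k, MeasurableSpace.comap (X j) inferInstance]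
      fun ω => ∑ i ∈ Finset.range k, X i ω :=
  Finset.measurable_sum _ fun i hi => measurable_iff_comap_le.2 <|
    le_iSup₂ (f := fun j (_ : j ∈ Finset.range k) => MeasurableSpace.comap (X j) inferInstance)
      i hi

lemma lintegral_exp_mul_sum_le {X : ℕ → Ω → ℝ} (hX : ∀ i, Measurable (X i)) {n : ℕ}
    (hC₁ : 0 ≤ C₁) (ht : 0 ≤ t) (htc : t < c₁)
    (hcond : ∀ i, i < n → ∀ lam : ℝ, 0 < lam →
      ∀ᵐ ω ∂P,
        (P[Set.indicator {ω' | lam < X i ω'} (fun _ => (1 : ℝ)) |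
            ⨆ j ∈ Finset.range i, MeasurableSpace.comap (X j) inferInstance]) ω
          ≤ C₁ * exp (-c₁ * lam)) :
    ∫⁻ ω, ENNReal.ofReal (exp (t * ∑ i ∈ Finset.range n, X i ω)) ∂P
      ≤ ENNReal.ofReal (expMomentConst C₁ c₁ t) ^ n * P Set.univ := by
  induction n with
  | zero => simp
  | succ k ih =>
    have hpast : (⨆ j ∈ Finset.range k, MeasurableSpace.comap (X j) inferInstance) ≤ mΩ :=
      iSup₂_le fun j _ => (hX j).comap_le
    have hF : Measurable[⨆ j ∈ Finset.range k, MeasurableSpace.comap (X j) inferInstance]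
        fun ω => ENNReal.ofReal (exp (t * ∑ i ∈ Finset.range k, X i ω)) :=
      ENNReal.measurable_ofReal.comp <| measurable_exp.comp <|
        (measurable_sum_range_iSup_comap X k).const_mul t
    simp_rw [Finset.sum_range_succ, mul_add, exp_add, ENNReal.ofReal_mul (exp_pos _).le]
    calc _ ≤ ENNReal.ofReal (expMomentConst C₁ c₁ t)
            * ∫⁻ ω, ENNReal.ofReal (exp (t * ∑ i ∈ Finset.range k, X i ω)) ∂P :=
          lintegral_mul_exp_le_of_condExp_tail hpast (hX k) hC₁ ht htc
            (hcond k (Nat.lt_succ_self k)) hF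
      _ ≤ ENNReal.ofReal (expMomentConst C₁ c₁ t) ^ (k + 1) * P Set.univ := by
          rw [pow_succ', mul_assoc]
          gcongr
          exact ih fun i hi => hcond i (Nat.lt_succ_of_lt hi)

lemma measure_lt_le_of_lintegral_exp_le {μ : Measure Ω} {Z : Ω → ℝ} (hZ : Measurable Z)
    {a K : ℝ} (ht : 0 ≤ t)
    (hK : ∫⁻ ω, ENNReal.ofReal (exp (t * Z ω)) ∂μ ≤ ENNReal.ofReal K) :
    μ {ω | a < Z ω} ≤ ENNReal.ofReal (exp (-(t * a)) * K) :=
  calc μ {ω | a < Z ω}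
      ≤ μ {ω | ENNReal.ofReal (exp (t * a)) ≤ ENNReal.ofReal (exp (t * Z ω))} :=
        measure_mono fun ω hω =>
          ENNReal.ofReal_le_ofReal (exp_le_exp.2 (mul_le_mul_of_nonneg_left (le_of_lt hω) ht))
    _ ≤ (∫⁻ ω, ENNReal.ofReal (exp (t * Z ω)) ∂μ) / ENNReal.ofReal (exp (t * a)) :=
        meas_ge_le_lintegral_div (by fun_prop) (ENNReal.ofReal_pos.2 (exp_pos _)).ne'
          ENNReal.ofReal_ne_top
    _ ≤ ENNReal.ofReal K / ENNReal.ofReal (exp (t * a)) := by gcongr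
    _ = ENNReal.ofReal (exp (-(t * a)) * K) := by
        rw [← ENNReal.ofReal_div_of_pos (exp_pos _), exp_neg, inv_mul_eq_div]

end

/-- If `X_0, …, X_{n-1}` are real random variables such that each `X_i`,
conditionally on `X_0, …, X_{i-1}`, satisfies the exponential tail bound
`P(X_i > λ) ≤ C₁ e^{-c₁ λ}` for all `λ > 0`, then there are constants `C, c > 0`
depending only on `C₁, c₁` (not on `n`) such that
`P(∑ X_i > λ n) ≤ C e^{-c λ}` for all `λ > 0`. -/
theorem sum_of_conditionally_exponential_tails
    (C₁ c₁ : ℝ) (hC₁ : 0 < C₁) (hc₁ : 0 < c₁) :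
    ∃ C > 0, ∃ c > 0,
      ∀ (Ω : Type) (_ : MeasurableSpace Ω) (P : Measure Ω),
        IsProbabilityMeasure P →
        ∀ (n : ℕ) (X : ℕ → Ω → ℝ), (∀ i, Measurable (X i)) →
        (∀ i, i < n → ∀ lam : ℝ, 0 < lam →
          ∀ᵐ ω ∂P,
            (P[Set.indicator {ω' | lam < X i ω'} (fun _ => (1 : ℝ)) |
                ⨆ j ∈ Finset.range i, MeasurableSpace.comap (X j) inferInstance]) ω
              ≤ C₁ * Real.exp (-c₁ * lam)) →
        ∀ lam : ℝ, 0 < lam →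
          P {ω | lam * n < ∑ i ∈ Finset.range n, X i ω}
            ≤ ENNReal.ofReal (C * Real.exp (-c * lam)) := by
  set t := c₁ / 2
  set M := expMomentConst C₁ c₁ t
  have ht : 0 < t := by positivity
  have htc : t < c₁ := half_lt_self hc₁
  have hM : 0 < M := add_pos_of_pos_of_nonneg (exp_pos t) <|
    mul_nonneg (by positivity) (inv_nonneg.2 (sub_nonneg.2 (exp_le_one_iff.2 (by linarith))))
  refine ⟨M, hM, t, ht, fun Ω _ P _ n X hX hcond lam _ => ?_⟩
  have hchernoff : P {ω | lam * n < ∑ i ∈ Finset.range n, X i ω}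
      ≤ ENNReal.ofReal ((M * exp (-t * lam)) ^ n) := by
    have hmoment := lintegral_exp_mul_sum_le hX hC₁.le ht.le htc hcond
    rw [measure_univ, mul_one, ← ENNReal.ofReal_pow hM.le] at hmoment
    convert measure_lt_le_of_lintegral_exp_le (Finset.measurable_sum _ fun i _ => hX i)
      ht.le hmoment using 2
    rw [mul_pow, ← exp_nat_mul, mul_comm]
    ring_nf
  rcases Nat.eq_zero_or_pos n with rfl | hn
  · simp
  rcases le_or_gt 1 (M * exp (-t * lam)) with hbig | hsmall
  · exact prob_le_one.trans (ENNReal.one_le_ofReal.2 hbig)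
  · exact hchernoff.trans <| ENNReal.ofReal_le_ofReal <|
      pow_le_of_le_one (by positivity) hsmall.le hn.ne'
end

section
/- Let R be a path (finite sequence of adjacent vertices) in a graph, and suppose t is a cut time of R, i.e., R[0,t] ∩ R(t, end] = ∅. Then R(t) belongs to the loop-erasure LE(R). Moreover, if t₁ < t₂ are two distinct cut times then R(t₁) ≠ R(t₂); consequently #LE(R) is at least the number of cut times of R. -/
/-!
Loop-erasure is compatible with cutting the path: if `A` and `B` are disjoint, then
`LE(A ++ B) = LE(A) ++ LE(B)`, because the last visit of a point of `A` happens inside `A`.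
Since `LE(A)` always contains the endpoint of `A`, applying this to the split of `l` at a cut
time `t` puts `l(t)` into `LE(l)`. Distinct cut times give distinct points because the earlier
point is never visited again, so `t ↦ l(t)` injects the cut times into `LE(l)`.
-/

/-- Chronological loop-erasure of a finite path, given as a list of vertices. -/
def loopErase {V : Type*} [DecidableEq V] : List V → List V
  | [] => []
  | x :: xs => x :: loopErase ((xs.reverse.takeWhile (· ≠ x)).reverse)
  termination_by l => l.length
  decreasing_by
    simp only [List.length_reverse, List.length_cons, List.unattach_reverse, List.unattach_attach]
    have := (List.takeWhile_sublist (l := xs.reverse) (fun y => decide (y ≠ x))).length_le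
    simp only [List.length_reverse] at this
    omega

/-- `t` is a cut time of the path `l`: no point visited up to time `t` is visited again
after time `t`. -/
def IsCutTime {V : Type*} (l : List V) (t : Fin l.length) : Prop :=
  ∀ s₁ s₂ : Fin l.length, s₁.val ≤ t.val → t.val < s₂.val → l.get s₁ ≠ l.get s₂

namespace List

variable {V : Type*} [DecidableEq V]

/-- The part of `xs` after the last visit to `x` (all of `xs` if `x ∉ xs`). -/
def afterLast (x : V) (xs : List V) : List V :=
  (xs.reverse.takeWhile (· ≠ x)).reverse

theorem afterLast_suffix (x : V) (xs : List V) : afterLast x xs <:+ xs := by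
  simpa [afterLast] using (takeWhile_prefix (fun y => decide (y ≠ x)) (l := xs.reverse)).reverse

theorem afterLast_append_of_notMem {x : V} (A : List V) {B : List V} (hx : x ∉ B) :
    afterLast x (A ++ B) = afterLast x A ++ B := by
  have hB : ∀ y ∈ B.reverse, decide (y ≠ x) = true := by
    intro y hy
    simpa using ne_of_mem_of_not_mem (mem_reverse.mp hy) hx
  rw [afterLast, afterLast, reverse_append, takeWhile_append_of_pos hB, reverse_append,
    reverse_reverse]

theorem afterLast_nil (x : V) : afterLast x [] = [] := rfl

theorem getLast_cons_eq_of_afterLast_eq_nil {x : V} {xs : List V} (h : afterLast x xs = []) :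
    (x :: xs).getLast (cons_ne_nil x xs) = x := by
  rcases eq_nil_or_concat xs with rfl | ⟨ys, y, rfl⟩
  · rfl
  · have : ¬ y ≠ x := by simpa [afterLast] using h
    simpa using this

theorem induction_on_afterLast {motive : List V → Prop} (nil : motive [])
    (cons : ∀ x xs, motive (afterLast x xs) → motive (x :: xs)) (l : List V) : motive l :=
  loopErase.induct motive nil
    (fun x xs ih => cons x xs (by simp only [unattach_reverse, unattach_attach] at ih; exact ih)) l

end List

section LoopErase

open List

variable {V : Type*} [DecidableEq V]

theorem loopErase_cons (x : V) (xs : List V) :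
    loopErase (x :: xs) = x :: loopErase (afterLast x xs) :=
  loopErase.eq_2 x xs

theorem loopErase_append {A B : List V} (h : A.Disjoint B) :
    loopErase (A ++ B) = loopErase A ++ loopErase B := by
  induction A using induction_on_afterLast generalizing B with
  | nil => simp [loopErase]
  | cons x xs ih =>
    have hx : x ∉ B := h mem_cons_self
    have hrest : (afterLast x xs).Disjoint B :=
      disjoint_of_subset_left (fun _ hy => mem_cons_of_mem x ((afterLast_suffix x xs).subset hy)) h
    rw [cons_append, loopErase_cons, loopErase_cons, afterLast_append_of_notMem xs hx,
      ih hrest, cons_append]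

theorem getLast_mem_loopErase {l : List V} (hl : l ≠ []) : l.getLast hl ∈ loopErase l := by
  induction l using induction_on_afterLast with
  | nil => exact absurd rfl hl
  | cons x xs ih =>
    rw [loopErase_cons]
    by_cases hrest : afterLast x xs = []
    · rw [getLast_cons_eq_of_afterLast_eq_nil hrest]
      exact mem_cons_self
    · have hxs : xs ≠ [] := by rintro rfl; exact hrest (afterLast_nil x)
      rw [getLast_cons hxs, ← (afterLast_suffix x xs).getLast hrest]
      exact mem_cons_of_mem x (ih hrest)

end LoopErase

namespace IsCutTime

variable {V : Type*} {l : List V} {t : Fin l.length}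

theorem disjoint_take_drop (h : IsCutTime l t) : (l.take (t + 1)).Disjoint (l.drop (t + 1)) := by
  intro v hv hv'
  obtain ⟨i, hi, rfl⟩ := List.mem_iff_getElem.mp hv
  obtain ⟨j, hj, hij⟩ := List.mem_iff_getElem.mp hv'
  simp only [List.length_take, List.length_drop, List.getElem_take, List.getElem_drop] at hi hj hij
  exact h ⟨i, by omega⟩ ⟨t + 1 + j, by omega⟩ (by simp only; omega) (by simp only; omega) hij.symm

theorem get_mem_loopErase [DecidableEq V] (h : IsCutTime l t) : l.get t ∈ loopErase l := by
  have hsplit := loopErase_append h.disjoint_take_drop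
  rw [List.take_append_drop] at hsplit
  have hne : l.take (t + 1) ≠ [] := by simpa using List.ne_nil_of_length_pos t.pos
  rw [hsplit]
  refine List.mem_append_left _ ?_
  convert getLast_mem_loopErase hne using 1
  simp [List.getLast_eq_getElem]

theorem get_ne_of_lt (h : IsCutTime l t) {s : Fin l.length} (hts : t < s) : l.get t ≠ l.get s :=
  h t s le_rfl hts

end IsCutTime

theorem injOn_get_setOf_isCutTime {V : Type*} (l : List V) :
    Set.InjOn l.get {t | IsCutTime l t} := by
  intro t₁ h₁ t₂ h₂ heq
  rcases lt_trichotomy t₁ t₂ with hlt | rfl | hgt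
  · exact absurd heq (IsCutTime.get_ne_of_lt h₁ hlt)
  · rfl
  · exact absurd heq.symm (IsCutTime.get_ne_of_lt h₂ hgt)

/-- If `t` is a cut time of a path `l` then `l(t)` belongs to the
loop-erasure `LE(l)`; distinct cut times give distinct points; consequently the number of
cut times is at most `#LE(l)`. -/
theorem cut_times_in_loop_erasure {V : Type*} [DecidableEq V] (l : List V) :
    (∀ t : Fin l.length, IsCutTime l t → l.get t ∈ loopErase l) ∧
    (∀ t₁ t₂ : Fin l.length, IsCutTime l t₁ → IsCutTime l t₂ → t₁ ≠ t₂ →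
      l.get t₁ ≠ l.get t₂) ∧
    {t : Fin l.length | IsCutTime l t}.ncard ≤ (loopErase l).length := by
  refine ⟨fun t ht => ht.get_mem_loopErase,
    fun t₁ t₂ h₁ h₂ hne heq => hne (injOn_get_setOf_isCutTime l h₁ h₂ heq), ?_⟩
  calc {t : Fin l.length | IsCutTime l t}.ncard
      ≤ ((loopErase l).toFinset : Set V).ncard :=
        Set.ncard_le_ncard_of_injOn l.get (fun t ht => by simpa using ht.get_mem_loopErase)
          (injOn_get_setOf_isCutTime l)
    _ = (loopErase l).toFinset.card := Set.ncard_coe_finset _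
    _ ≤ (loopErase l).length := List.toFinset_card_le _
end
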